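/- Let A be a finite-dimensional algebra over an algebraically closed field K and Z an irreducible component of mod(A,d) that is a brick component (i.e., the generic value of dim End_A on Z equals 1) and does not contain a dense orbit. Then the generic value of (M,M') ↦ dim Hom_A(M,M') on Z × Z is 0; that is, for generic pairs (M,M') ∈ Z × Z, Hom_A(M,M') = 0. -/

import Mathlib

open TopologicalSpace Topology CategoryTheory

/-- The Zariski topology on a `K`-vector space `W`: the initial topology with
respect to all polynomial functions `W → K` (the `K`-subalgebra of functions
generated by the linear functionals), where `K` carries the cofinite topology
(the Zariski topology of the affine line over an algebraically closed field). -/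
noncomputable def zariskiTopology (K W : Type*) [Field K] [AddCommGroup W] [Module K W] :
    TopologicalSpace W :=
  ⨅ f ∈ (Algebra.adjoin K (Set.range fun (φ : Module.Dual K W) => (φ : W → K)) :
      Subalgebra K (W → K)),
    TopologicalSpace.induced (fun w => CofiniteTopology.of (f w)) inferInstance

variable (K A : Type) [Field K] [Ring A] [Algebra K A]

/-- The variety `mod(A,d)` of `d`-dimensional `A`-module structures: the set of
`K`-algebra homomorphisms `A → M_d(K)`. -/
abbrev ModVar (d : ℕ) := A →ₐ[K] Matrix (Fin d) (Fin d) K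

/-- `mod(A,d)` carries the (subspace) Zariski topology, induced from the
Zariski topology of the affine space of linear maps `A → M_d(K)`. -/
noncomputable instance (d : ℕ) : TopologicalSpace (ModVar K A d) :=
  TopologicalSpace.induced (fun M : ModVar K A d => M.toLinearMap)
    (zariskiTopology K (A →ₗ[K] Matrix (Fin d) (Fin d) K))

/-- The `GL_d(K)`-orbit of a point of `mod(A,d)` under the conjugation action:
the set of module structures isomorphic to `M`. -/
def orbitSet {d : ℕ} (M : ModVar K A d) : Set (ModVar K A d) :=
  {M' | ∃ g : (Matrix (Fin d) (Fin d) K)ˣ,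
    ∀ a : A, M' a = (↑g⁻¹ : Matrix (Fin d) (Fin d) K) * M a * (↑g : Matrix (Fin d) (Fin d) K)}

/-- The space `Hom_A(M, M')` of `A`-module homomorphisms between the module
structures corresponding to points `M ∈ mod(A,d)`, `M' ∈ mod(A,d')`: the
`K`-linear maps intertwining the two actions. -/
def homSpace {d d' : ℕ} (M : ModVar K A d) (M' : ModVar K A d') :
    Submodule K ((Fin d → K) →ₗ[K] (Fin d' → K)) where
  carrier := {f | ∀ a : A,
    f.comp (Matrix.mulVecLin (M a)) = (Matrix.mulVecLin (M' a)).comp f}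
  add_mem' := by
    intro f g hf hg
    intro a
    simp only [Set.mem_setOf_eq] at hf hg
    rw [LinearMap.add_comp, LinearMap.comp_add, hf a, hg a]
  zero_mem' := by
    intro a
    rw [LinearMap.zero_comp, LinearMap.comp_zero]
  smul_mem' := by
    intro c f hf
    intro a
    simp only [Set.mem_setOf_eq] at hf
    rw [LinearMap.smul_comp, LinearMap.comp_smul, hf a]


/-!
Suppose `Hom_A(M, M') ≠ 0` for all `M, M' ∈ Z` and let `B ∈ Z` be a brick. For a module
structure `M`, the space `Hom_A(B, M)` is the kernel of a linear system whose coefficients are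
linear in `M`, and this system has corank one at `M = B`. A cofactor vector of suitably chosen
rows therefore gives intertwiners `F(M) ∈ Hom_A(B, M)` and `G(M) ∈ Hom_A(M, B)` that depend
polynomially on `M`, are nonzero at `M = B`, and work wherever the Hom space is nonzero. Since
`B` is a brick, `G(M) F(M)` is a scalar, so `M ≅ B` unless `G(M) F(M) = 0`. Hence `Z` is
covered by the orbit of `B` and the closed set `{M | G(M) F(M) = 0}`, which does not contain
`B`. The orbit is irreducible, because any two of its points lie on the image of a punctured
line `t ↦ g(t)⁻¹ B g(t)` with `g(t) = g₂ + t (g₁ - g₂)`. So the irreducible component `Z` is the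
closure of the orbit of `B`.
-/

open Polynomial
open scoped Kronecker

section Topology

variable {X : Type*} [TopologicalSpace X]

theorem isPreirreducible_of_forall_exists_isPreirreducible {s : Set X}
    (h : ∀ x ∈ s, ∀ y ∈ s, ∃ t ⊆ s, IsPreirreducible t ∧ x ∈ t ∧ y ∈ t) :
    IsPreirreducible s := by
  rintro u v hu hv ⟨x, hxs, hxu⟩ ⟨y, hys, hyv⟩
  obtain ⟨t, hts, ht, hxt, hyt⟩ := h x hxs y hys
  obtain ⟨z, hzt, hz⟩ := ht u v hu hv ⟨x, hxt, hxu⟩ ⟨y, hyt, hyv⟩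
  exact ⟨z, hts hzt, hz⟩

theorem closure_eq_of_mem_irreducibleComponents_of_subset_union {Z s Y : Set X} {x : X}
    (hZ : Z ∈ irreducibleComponents X) (hs : IsIrreducible s) (hY : IsClosed Y)
    (hxZ : x ∈ Z) (hxY : x ∉ Y) (hcover : Z ⊆ Y ∪ s) : closure s = Z := by
  have hZs : Z ⊆ closure s :=
    ((isPreirreducible_iff_isClosed_union_isClosed.1 hZ.1.2) Y (closure s) hY isClosed_closure
      (hcover.trans (Set.union_subset_union_right Y subset_closure))).resolve_left
      fun hZY => hxY (hZY hxZ)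
  exact (hZ.2 hs.closure hZs).antisymm hZs

theorem CofiniteTopology.continuous_of_isClosed_fiber {Y : Type*} {f : X → Y}
    (hf : ∀ y, IsClosed (f ⁻¹' {y})) : Continuous fun x => CofiniteTopology.of (f x) := by
  refine continuous_iff_isClosed.2 fun s hs => ?_
  rcases CofiniteTopology.isClosed_iff.1 hs with rfl | hfin
  · exact isClosed_univ
  · rw [← Set.biUnion_preimage_singleton]
    refine hfin.isClosed_biUnion fun y _ => ?_
    change IsClosed (f ⁻¹' (CofiniteTopology.of ⁻¹' {y}))
    rw [← CofiniteTopology.of.image_symm_eq_preimage, Set.image_singleton]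
    exact hf _

theorem Polynomial.isClosed_setOf_eval_eq_zero {K : Type*} [Field K] (P : K[X]) :
    IsClosed {t : CofiniteTopology K | P.eval (CofiniteTopology.of.symm t) = 0} := by
  rcases eq_or_ne P 0 with rfl | hP
  · simp
  · exact CofiniteTopology.isClosed_iff.2 <| Or.inr <|
      (P.finite_setOfPred_isRoot hP).preimage CofiniteTopology.of.symm.injective.injOn

end Topology

section Zariski

variable {K W : Type*} [Field K] [AddCommGroup W] [Module K W]

variable (K W) in
abbrev polyFunctions : Subalgebra K (W → K) :=
  Algebra.adjoin K (Set.range fun (φ : Module.Dual K W) => (φ : W → K))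

def evalAt (w : W) : polyFunctions K W →ₐ[K] K :=
  (Pi.evalAlgHom K (fun _ => K) w).comp (polyFunctions K W).val

@[simp]
theorem evalAt_apply (w : W) (q : polyFunctions K W) : evalAt w q = (q : W → K) w :=
  rfl

theorem isClosed_setOf_apply_eq_zero {q : W → K} (hq : q ∈ polyFunctions K W) :
    IsClosed[zariskiTopology K W] {w | q w = 0} := by
  let := zariskiTopology K W
  have hcont : Continuous fun w => CofiniteTopology.of (q w) :=
    continuous_iInf_dom (continuous_iInf_dom (i := hq) continuous_induced_dom)
  simpa [Set.preimage, CofiniteTopology.of.injective.eq_iff] using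
    (isClosed_singleton (x := CofiniteTopology.of 0)).preimage hcont

theorem isClosed_setOf_map_evalAt_eq_zero {m n : Type*} [Finite m] [Finite n]
    (P : Matrix m n (polyFunctions K W)) :
    IsClosed[zariskiTopology K W] {w | P.map (evalAt w) = 0} := by
  let := zariskiTopology K W
  have : {w | P.map (evalAt w) = 0} = ⋂ i, ⋂ j, {w | (P i j : W → K) w = 0} := by
    ext w
    simp [← Matrix.ext_iff]
  rw [this]
  exact isClosed_iInter fun i => isClosed_iInter fun j => isClosed_setOf_apply_eq_zero (P i j).2

theorem continuous_zariskiTopology_of {Y : Type*} [TopologicalSpace Y] {f : Y → W}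
    (h : ∀ q ∈ polyFunctions K W, Continuous fun y => CofiniteTopology.of (q (f y))) :
    Continuous[_, zariskiTopology K W] f :=
  continuous_iInf_rng.2 fun q => continuous_iInf_rng.2 fun hq => continuous_induced_rng.2 (h q hq)

def IsRationalCurve (γ : K → W) (D : K[X]) : Prop :=
  ∀ φ : Module.Dual K W, ∃ N : K[X], ∀ t, D.eval t ≠ 0 → φ (γ t) * D.eval t = N.eval t

theorem IsRationalCurve.exists_mul_pow_eq_eval {γ : K → W} {D : K[X]}
    (hγ : IsRationalCurve γ D) {q : W → K} (hq : q ∈ polyFunctions K W) :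
    ∃ (m : ℕ) (N : K[X]), ∀ t, D.eval t ≠ 0 → q (γ t) * D.eval t ^ m = N.eval t := by
  induction hq using Algebra.adjoin_induction with
  | mem q hq =>
    obtain ⟨φ, rfl⟩ := hq
    obtain ⟨N, hN⟩ := hγ φ
    exact ⟨1, N, by simpa using hN⟩
  | algebraMap c => exact ⟨0, C c, fun t _ => by simp⟩
  | add q₁ q₂ _ _ ih₁ ih₂ =>
    obtain ⟨m₁, N₁, h₁⟩ := ih₁
    obtain ⟨m₂, N₂, h₂⟩ := ih₂
    refine ⟨m₁ + m₂, N₁ * D ^ m₂ + N₂ * D ^ m₁, fun t ht => ?_⟩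
    simp only [Pi.add_apply, eval_add, eval_mul, eval_pow, ← h₁ t ht, ← h₂ t ht]
    ring
  | mul q₁ q₂ _ _ ih₁ ih₂ =>
    obtain ⟨m₁, N₁, h₁⟩ := ih₁
    obtain ⟨m₂, N₂, h₂⟩ := ih₂
    refine ⟨m₁ + m₂, N₁ * N₂, fun t ht => ?_⟩
    simp only [Pi.mul_apply, eval_mul, ← h₁ t ht, ← h₂ t ht]
    ring

theorem IsRationalCurve.continuous {γ : K → W} {D : K[X]} (hγ : IsRationalCurve γ D) :
    Continuous[_, zariskiTopology K W]
      fun t : {t : CofiniteTopology K | D.eval (CofiniteTopology.of.symm t) ≠ 0} =>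
        γ (CofiniteTopology.of.symm t) := by
  refine continuous_zariskiTopology_of fun q hq => ?_
  obtain ⟨m, N, hN⟩ := hγ.exists_mul_pow_eq_eval hq
  refine CofiniteTopology.continuous_of_isClosed_fiber fun c => ?_
  convert (Polynomial.isClosed_setOf_eval_eq_zero (N - C c * D ^ m)).preimage
    continuous_subtype_val using 1
  ext ⟨t, ht⟩
  simp only [Set.mem_preimage, Set.mem_singleton_iff, Set.mem_ofPred_eq, eval_sub, eval_mul,
    eval_C, eval_pow, sub_eq_zero, ← hN _ ht]
  exact (mul_left_inj' (pow_ne_zero m ht)).symm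

end Zariski

theorem Polynomial.exists_eval_eq_bilinear_map {K : Type*} [CommRing K]
    {m₁ m₂ n₁ n₂ : Type*} [Fintype m₁] [Fintype m₂] [Fintype n₁] [Fintype n₂]
    [DecidableEq m₁] [DecidableEq m₂] [DecidableEq n₁] [DecidableEq n₂]
    (β : Matrix m₁ m₂ K →ₗ[K] Matrix n₁ n₂ K →ₗ[K] K) (P : Matrix m₁ m₂ K[X])
    (Q : Matrix n₁ n₂ K[X]) :
    ∃ N : K[X], ∀ t, β (P.map (eval t)) (Q.map (eval t)) = N.eval t := by
  refine ⟨∑ k, ∑ l, ∑ i, ∑ j,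
    C (β (Matrix.single i j 1) (Matrix.single k l 1)) * P i j * Q k l, fun t => ?_⟩
  have hβ : ∀ i j k l (a b : K), β (Matrix.single i j a) (Matrix.single k l b) =
      β (Matrix.single i j 1) (Matrix.single k l 1) * a * b := by
    intro i j k l a b
    rw [show Matrix.single i j a = a • Matrix.single i j 1 by simp [Matrix.smul_single],
      show Matrix.single k l b = b • Matrix.single k l 1 by simp [Matrix.smul_single]]
    simp only [map_smul, LinearMap.smul_apply, smul_eq_mul]
    ring
  rw [Matrix.matrix_eq_sum_single (P.map (eval t)), Matrix.matrix_eq_sum_single (Q.map (eval t))]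
  simp only [map_sum, LinearMap.sum_apply, eval_finsetSum, eval_mul, eval_C, Matrix.map_apply]
  exact Finset.sum_congr rfl fun k _ => Finset.sum_congr rfl fun l _ =>
    Finset.sum_congr rfl fun i _ => Finset.sum_congr rfl fun j _ => hβ ..

namespace Matrix

section Cofactor

variable {R : Type*} [CommRing R] {ι : Type*} {e : ℕ}

def cofactorVec (Q : Matrix ι (Fin (e + 1)) R) (r : Fin e → ι) : Fin (e + 1) → R :=
  fun j => (-1) ^ (j : ℕ) * (of fun i k => Q (r i) (j.succAbove k)).det

theorem cofactorVec_map {S : Type*} [CommRing S] (f : R →+* S) (Q : Matrix ι (Fin (e + 1)) R)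
    (r : Fin e → ι) : cofactorVec (Q.map f) r = f ∘ cofactorVec Q r := by
  funext j
  simp only [cofactorVec, Function.comp_apply, map_mul, map_pow, map_neg, map_one,
    RingHom.map_det]
  rfl

theorem det_of_cons_eq_dotProduct_cofactorVec (Q : Matrix ι (Fin (e + 1)) R) (r : Fin e → ι)
    (y : Fin (e + 1) → R) :
    (of (Fin.cons y fun i => Q (r i))).det = y ⬝ᵥ cofactorVec Q r := by
  rw [det_succ_row_zero, dotProduct]
  refine Finset.sum_congr rfl fun j _ => ?_
  simp [cofactorVec, submatrix]
  ring

variable {K : Type*} [Field K]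

theorem mulVec_cofactorVec_eq_zero {Q : Matrix ι (Fin (e + 1)) K} (r : Fin e → ι)
    (hQ : ∃ x ≠ 0, Q *ᵥ x = 0) : Q *ᵥ cofactorVec Q r = 0 := by
  obtain ⟨x, hx0, hx⟩ := hQ
  funext i
  rw [Pi.zero_apply, mulVec, ← det_of_cons_eq_dotProduct_cofactorVec]
  have hsub : of (Fin.cons (Q i) fun k => Q (r k)) = Q.submatrix (Fin.cons i r) id := by
    ext k l
    cases k using Fin.cases <;> simp
  rw [← exists_mulVec_eq_zero_iff, hsub]
  refine ⟨x, hx0, ?_⟩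
  simpa [hx] using Q.submatrix_mulVec_equiv x (Fin.cons i r) (Equiv.refl _)

theorem exists_cofactorVec_ne_zero [Finite ι] {Q : Matrix ι (Fin (e + 1)) K} (hQ : Q.rank = e) :
    ∃ r : Fin e → ι, cofactorVec Q r ≠ 0 := by
  obtain ⟨κ, a, ha, hspan, hli⟩ := exists_linearIndependent' K Q.row
  have : Finite κ := Finite.of_injective a ha
  have hcard : Nat.card κ = e := by
    have := Fintype.ofFinite κ
    rw [← hQ, rank_eq_finrank_span_row, ← hspan, finrank_span_eq_card hli,
      Nat.card_eq_fintype_card]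
  let σ : Fin e ≃ κ := (Finite.equivFinOfCardEq hcard).symm
  have hli' : LinearIndependent K fun i => Q (a (σ i)) := hli.comp σ σ.injective
  obtain ⟨y, hy⟩ : ∃ y, y ∉ Submodule.span K (Set.range fun i => Q (a (σ i))) := by
    by_contra! h
    have := finrank_span_eq_card hli'
    rw [Submodule.eq_top_iff'.2 h, finrank_top] at this
    simp at this
  refine ⟨fun i => a (σ i), fun h0 => ?_⟩
  have hunit := (linearIndependent_rows_iff_isUnit (A := of (Fin.cons y fun i => Q (a (σ i))))).1
    (linearIndependent_finCons.2 ⟨hli', hy⟩)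
  rw [isUnit_iff_isUnit_det, det_of_cons_eq_dotProduct_cofactorVec] at hunit
  simp [h0] at hunit

theorem exists_kernelVec_family {R : Type*} [CommRing R] [Finite ι] {n : Type*} [Fintype n]
    (Q : Matrix ι n R) (φ₀ : R →+* K) (hQ : (Q.map φ₀).rank + 1 = Fintype.card n) :
    ∃ v : n → R, φ₀ ∘ v ≠ 0 ∧
      ∀ φ : R →+* K, (∃ x ≠ 0, Q.map φ *ᵥ x = 0) → Q.map φ *ᵥ (φ ∘ v) = 0 := by
  let σ : Fin ((Q.map φ₀).rank + 1) ≃ n := (Fintype.equivFinOfCardEq hQ.symm).symm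
  have hmap : ∀ φ : R →+* K, (Q.submatrix id σ).map φ = (Q.map φ).submatrix id σ :=
    fun _ => rfl
  obtain ⟨r, hr⟩ := exists_cofactorVec_ne_zero (Q := (Q.map φ₀).submatrix id σ)
    ((Q.map φ₀).rank_submatrix (Equiv.refl ι) σ)
  refine ⟨cofactorVec (Q.submatrix id σ) r ∘ σ.symm, fun h0 => hr ?_, fun φ hφ => ?_⟩
  · rw [← hmap, cofactorVec_map]
    funext j
    simpa using congrFun h0 (σ j)
  · obtain ⟨x, hx0, hx⟩ := hφ
    have hker := mulVec_cofactorVec_eq_zero (Q := (Q.map φ).submatrix id σ) r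
      ⟨x ∘ σ, fun h => hx0 (funext fun k => by simpa using congrFun h (σ.symm k)),
        by simp [submatrix_mulVec_equiv, Function.comp_assoc, hx]⟩
    rw [← hmap, cofactorVec_map, hmap, submatrix_mulVec_equiv] at hker
    simpa [Function.comp_assoc] using hker

end Cofactor

section Intertwiner

variable {R : Type*} [CommRing R] {ι m : Type*} [DecidableEq m]

/-- `vec` stacks columns, so `vec (F * L) = (Lᵀ ⊗ₖ 1) *ᵥ vec F` and
`vec (N * F) = (1 ⊗ₖ N) *ᵥ vec F`. -/
def intertwinerMatrix (L N : ι → Matrix m m R) : Matrix (ι × (m × m)) (m × m) R :=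
  of fun ip => ((L ip.1)ᵀ ⊗ₖ 1 - 1 ⊗ₖ N ip.1 : Matrix (m × m) (m × m) R) ip.2

theorem intertwinerMatrix_map {S : Type*} [CommRing S] (f : R →+* S) (L N : ι → Matrix m m R) :
    (intertwinerMatrix L N).map f =
      intertwinerMatrix (fun i => (L i).map f) (fun i => (N i).map f) := by
  ext ⟨i, p⟩ q
  simp only [intertwinerMatrix, map_apply, of_apply, sub_apply, kroneckerMap_apply,
    transpose_apply, one_apply, map_sub, map_mul]
  split_ifs <;> simp

variable [Fintype m]

theorem intertwinerMatrix_mulVec_vec (L N : ι → Matrix m m R) (F : Matrix m m R) :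
    intertwinerMatrix L N *ᵥ vec F = fun ip => vec (F * L ip.1 - N ip.1 * F) ip.2 := by
  funext ⟨i, p⟩
  change (((L i)ᵀ ⊗ₖ 1 - 1 ⊗ₖ N i : Matrix (m × m) (m × m) R) *ᵥ vec F) p = _
  rw [sub_mulVec, kronecker_mulVec_vec, kronecker_mulVec_vec, vec_sub]
  simp

theorem intertwinerMatrix_mulVec_vec_eq_zero_iff (L N : ι → Matrix m m R) (F : Matrix m m R) :
    intertwinerMatrix L N *ᵥ vec F = 0 ↔ ∀ i, F * L i = N i * F := by
  simp only [intertwinerMatrix_mulVec_vec, funext_iff, Prod.forall, Pi.zero_apply]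
  refine forall_congr' fun i => ?_
  rw [← sub_eq_zero, ← vec_eq_zero_iff, funext_iff]
  simp [Prod.forall]

end Intertwiner

end Matrix

namespace ModVar

variable {K A : Type} [Field K] [Ring A] [Algebra K A] {d : ℕ}

section Orbit

def sandwich (B : ModVar K A d) :
    Matrix (Fin d) (Fin d) K →ₗ[K] Matrix (Fin d) (Fin d) K →ₗ[K]
      (A →ₗ[K] Matrix (Fin d) (Fin d) K) :=
  LinearMap.mk₂ K
    (fun P Q => (LinearMap.mulLeft K P ∘ₗ LinearMap.mulRight K Q) ∘ₗ B.toLinearMap)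
    (fun _ _ _ => by ext; simp [add_mul]) (fun _ _ _ => by ext; simp)
    (fun _ _ _ => by ext; simp [mul_add]) (fun _ _ _ => by ext; simp)

@[simp]
theorem sandwich_apply (B : ModVar K A d) (P Q : Matrix (Fin d) (Fin d) K) (a : A) :
    sandwich B P Q a = P * B a * Q := by
  simp [sandwich, mul_assoc]

def conjugate (B : ModVar K A d) (g : (Matrix (Fin d) (Fin d) K)ˣ) : ModVar K A d :=
  (MulSemiringAction.toAlgHom K _ (ConjAct.toConjAct g⁻¹)).comp B

@[simp]
theorem conjugate_apply (B : ModVar K A d) (g : (Matrix (Fin d) (Fin d) K)ˣ) (a : A) :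
    conjugate B g a =
      (↑g⁻¹ : Matrix (Fin d) (Fin d) K) * B a * (g : Matrix (Fin d) (Fin d) K) := by
  simp [conjugate, ConjAct.units_smul_def]

theorem mem_orbitSet_iff {B M : ModVar K A d} :
    M ∈ orbitSet K A B ↔ ∃ g, M = conjugate B g := by
  simp [orbitSet, AlgHom.ext_iff]

theorem conjugate_toLinearMap (B : ModVar K A d) (g : (Matrix (Fin d) (Fin d) K)ˣ) :
    (conjugate B g).toLinearMap = (g : Matrix (Fin d) (Fin d) K).det⁻¹ •
      sandwich B (g : Matrix (Fin d) (Fin d) K).adjugate g := by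
  ext1 a
  simp [Matrix.coe_units_inv, Matrix.inv_def, Ring.inverse_eq_inv]

theorem isRationalCurve_conjugate (B : ModVar K A d) (G : Matrix (Fin d) (Fin d) K[X]) :
    IsRationalCurve
      (fun t => (G.det.eval t)⁻¹ • sandwich B (G.map (eval t)).adjugate (G.map (eval t)))
      G.det := by
  intro φ
  obtain ⟨N, hN⟩ := exists_eval_eq_bilinear_map ((sandwich B).compr₂ φ) G.adjugate G
  refine ⟨N, fun t ht => ?_⟩
  have hadj : (G.map (eval t)).adjugate = G.adjugate.map (eval t) :=
    (RingHom.map_adjugate (evalRingHom t) G).symm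
  rw [map_smul, smul_eq_mul, mul_right_comm, inv_mul_cancel₀ ht, one_mul, hadj, ← hN t]
  rfl

theorem isPreirreducible_setOf_conjugate_eval [Infinite K] (B : ModVar K A d)
    (G : Matrix (Fin d) (Fin d) K[X]) :
    IsPreirreducible {M | ∃ g : (Matrix (Fin d) (Fin d) K)ˣ,
      (∃ t, (g : Matrix (Fin d) (Fin d) K) = G.map (eval t)) ∧ M = conjugate B g} := by
  have hdet : ∀ t, (G.map (eval t)).det = G.det.eval t := fun t =>
    (RingHom.map_det (evalRingHom t) G).symm
  let U := {t : CofiniteTopology K | G.det.eval (CofiniteTopology.of.symm t) ≠ 0}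
  have hunit : ∀ t : U, IsUnit (G.map (eval (CofiniteTopology.of.symm t))) := fun t => by
    rw [Matrix.isUnit_iff_isUnit_det, hdet, isUnit_iff_ne_zero]
    exact t.2
  let c : U → ModVar K A d := fun t => conjugate B (hunit t).unit
  have hc : Continuous c := by
    refine continuous_induced_rng.2 ?_
    convert (isRationalCurve_conjugate B G).continuous using 1
    funext t
    simp only [c, Function.comp_apply, conjugate_toLinearMap, IsUnit.unit_spec, hdet]
  have hU : IsPreirreducible U :=
    (IrreducibleSpace.isIrreducible_univ _).2.open_subset
      (Polynomial.isClosed_setOf_eval_eq_zero _).isOpen_compl (Set.subset_univ _)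
  have := Subtype.preirreducibleSpace hU
  convert (PreirreducibleSpace.isPreirreducible_univ (X := U)).image c hc.continuousOn using 1
  ext M
  simp only [Set.image_univ, Set.mem_range, Set.mem_ofPred_eq]
  constructor
  · rintro ⟨g, ⟨t, hgt⟩, rfl⟩
    have ht : G.det.eval t ≠ 0 := by
      rw [← hdet, ← hgt]
      exact (g.isUnit.map Matrix.detMonoidHom).ne_zero
    refine ⟨⟨CofiniteTopology.of t, by simpa [U] using ht⟩, ?_⟩
    simp only [c]
    congr 1
    ext1
    simp [hgt]
  · rintro ⟨t, rfl⟩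
    exact ⟨_, ⟨_, rfl⟩, rfl⟩

theorem isPreirreducible_orbitSet [Infinite K] (B : ModVar K A d) :
    IsPreirreducible (orbitSet K A B) := by
  refine isPreirreducible_of_forall_exists_isPreirreducible fun M₁ hM₁ M₂ hM₂ => ?_
  obtain ⟨g₁, rfl⟩ := mem_orbitSet_iff.1 hM₁
  obtain ⟨g₂, rfl⟩ := mem_orbitSet_iff.1 hM₂
  let G : Matrix (Fin d) (Fin d) K[X] :=
    (X : K[X]) • (g₁ - g₂ : Matrix (Fin d) (Fin d) K).map C +
      (g₂ : Matrix (Fin d) (Fin d) K).map C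
  refine ⟨_, ?_, isPreirreducible_setOf_conjugate_eval B G, ⟨g₁, ⟨1, ?_⟩, rfl⟩,
    ⟨g₂, ⟨0, ?_⟩, rfl⟩⟩
  · rintro M ⟨g, -, rfl⟩
    exact mem_orbitSet_iff.2 ⟨g, rfl⟩
  all_goals ext i j; simp [G]

end Orbit

section Hom

theorem mulVecLin_mem_homSpace_iff {d' : ℕ} (M : ModVar K A d) (M' : ModVar K A d')
    (F : Matrix (Fin d') (Fin d) K) :
    F.mulVecLin ∈ homSpace K A M M' ↔ ∀ a, F * M a = M' a * F := by
  refine forall_congr' fun a => ?_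
  rw [← Matrix.mulVecLin_mul, ← Matrix.mulVecLin_mul, ← Matrix.toLin'_apply',
    ← Matrix.toLin'_apply', Matrix.toLin'.injective.eq_iff]

theorem eq_smul_one_of_commute {B : ModVar K A d} (hB : Module.finrank K (homSpace K A B B) = 1)
    {F : Matrix (Fin d) (Fin d) K} (hF : ∀ a, F * B a = B a * F) : ∃ c : K, F = c • 1 := by
  rcases subsingleton_or_nontrivial (Matrix (Fin d) (Fin d) K) with h | h
  · exact ⟨0, Subsingleton.elim _ _⟩
  have h1 := (mulVecLin_mem_homSpace_iff B B 1).2 fun a => by rw [one_mul, mul_one]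
  have h1ne : (⟨_, h1⟩ : homSpace K A B B) ≠ 0 := fun h =>
    one_ne_zero (α := Matrix (Fin d) (Fin d) K) <|
      Matrix.toLin'.injective (by rw [map_zero, Matrix.toLin'_apply']; exact congrArg Subtype.val h)
  obtain ⟨c, hc⟩ := (finrank_eq_one_iff_of_nonzero' (⟨_, h1⟩ : homSpace K A B B) h1ne).1 hB
    ⟨_, (mulVecLin_mem_homSpace_iff B B F).2 hF⟩
  refine ⟨c, Matrix.toLin'.injective ?_⟩
  simpa [Subtype.ext_iff, Matrix.toLin'_apply'] using hc.symm

theorem mul_ne_zero_of_commute {B : ModVar K A d} (hB : Module.finrank K (homSpace K A B B) = 1)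
    {F G : Matrix (Fin d) (Fin d) K} (hG : ∀ a, G * B a = B a * G) (hF0 : F ≠ 0)
    (hG0 : G ≠ 0) :
    G * F ≠ 0 := by
  obtain ⟨c, rfl⟩ := eq_smul_one_of_commute hB hG
  rw [Matrix.smul_mul, one_mul]
  exact smul_ne_zero (by rintro rfl; simp at hG0) hF0

theorem mem_orbitSet_of_mul_ne_zero {B M : ModVar K A d}
    (hB : Module.finrank K (homSpace K A B B) = 1) {F G : Matrix (Fin d) (Fin d) K}
    (hF : ∀ a, F * B a = M a * F) (hG : ∀ a, G * M a = B a * G) (hGF : G * F ≠ 0) :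
    M ∈ orbitSet K A B := by
  obtain ⟨c, hc⟩ := eq_smul_one_of_commute hB (F := G * F) fun a => by
    rw [mul_assoc, hF, ← mul_assoc, hG, mul_assoc]
  have hc0 : c ≠ 0 := by rintro rfl; exact hGF (by simpa using hc)
  have hinv : (c⁻¹ • G) * F = 1 := by
    rw [Matrix.smul_mul, hc, smul_smul, inv_mul_cancel₀ hc0, one_smul]
  let u : (Matrix (Fin d) (Fin d) K)ˣ := ⟨F, c⁻¹ • G, mul_eq_one_comm.1 hinv, hinv⟩
  refine mem_orbitSet_iff.2 ⟨u⁻¹, AlgHom.ext fun a => ?_⟩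
  rw [conjugate_apply, inv_inv]
  change M a = F * B a * (c⁻¹ • G)
  rw [hF, mul_assoc, mul_eq_one_comm.1 hinv, mul_one]

variable [FiniteDimensional K A]

noncomputable def homSystem {R : Type*} [CommRing R] (L N : A → Matrix (Fin d) (Fin d) R) :
    Matrix (Fin (Module.finrank K A) × (Fin d × Fin d)) (Fin d × Fin d) R :=
  Matrix.intertwinerMatrix (fun i => L (Module.finBasis K A i)) (fun i => N (Module.finBasis K A i))

theorem homSystem_map {R : Type*} [CommRing R] (L N : A → Matrix (Fin d) (Fin d) R)
    (φ : R →+* K) (M M' : ModVar K A d) (hL : ∀ a, (L a).map φ = M a)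
    (hN : ∀ a, (N a).map φ = M' a) :
    (homSystem (K := K) L N).map φ = homSystem (K := K) M M' := by
  simp only [homSystem, Matrix.intertwinerMatrix_map, hL, hN]

theorem homSystem_mulVec_vec_eq_zero_iff (M M' : ModVar K A d) (F : Matrix (Fin d) (Fin d) K) :
    (homSystem (K := K) M M').mulVec F.vec = 0 ↔ ∀ a, F * M a = M' a * F := by
  rw [homSystem, Matrix.intertwinerMatrix_mulVec_vec_eq_zero_iff]
  refine ⟨fun h => ?_, fun h i => h _⟩
  have := (Module.finBasis K A).ext (f₁ := LinearMap.mulLeft K F ∘ₗ M.toLinearMap)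
    (f₂ := LinearMap.mulRight K F ∘ₗ M'.toLinearMap) (by simpa using h)
  exact fun a => by simpa using LinearMap.congr_fun this a

theorem finrank_homSpace_eq_finrank_ker (M M' : ModVar K A d) :
    Module.finrank K (homSpace K A M M') =
      Module.finrank K (LinearMap.ker (homSystem (K := K) M M').mulVecLin) := by
  let e : ((Fin d → K) →ₗ[K] (Fin d → K)) ≃ₗ[K] (Fin d × Fin d → K) :=
    LinearMap.toMatrix'.trans
      (LinearEquiv.ofBijective ⟨⟨Matrix.vec, Matrix.vec_add⟩, Matrix.vec_smul⟩
        Matrix.vec_bijective)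
  suffices h : (homSpace K A M M').map (e : _ →ₗ[K] _) =
      LinearMap.ker (homSystem (K := K) M M').mulVecLin by
    rw [← e.finrank_map_eq, h]
  ext x
  obtain ⟨F, rfl⟩ := Matrix.vec_bijective.2 x
  have he : e.symm F.vec = F.mulVecLin := e.symm_apply_eq.2 (by simp [e, ← Matrix.toLin'_apply'])
  rw [Submodule.mem_map_equiv, LinearMap.mem_ker, Matrix.mulVecLin_apply,
    homSystem_mulVec_vec_eq_zero_iff, he, mulVecLin_mem_homSpace_iff]

theorem exists_intertwiner_family {R : Type*} [CommRing R] (L N : A → Matrix (Fin d) (Fin d) R)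
    (φ₀ : R →+* K) {M₀ M₀' : ModVar K A d} (hL₀ : ∀ a, (L a).map φ₀ = M₀ a)
    (hN₀ : ∀ a, (N a).map φ₀ = M₀' a)
    (h₀ : Module.finrank K (homSpace K A M₀ M₀') = 1) :
    ∃ F : Matrix (Fin d) (Fin d) R, F.map φ₀ ≠ 0 ∧
      ∀ (φ : R →+* K) (M M' : ModVar K A d), (∀ a, (L a).map φ = M a) →
        (∀ a, (N a).map φ = M' a) → Module.finrank K (homSpace K A M M') ≠ 0 →
          ∀ a, F.map φ * M a = M' a * F.map φ := by
  have hrank : (homSystem (K := K) M₀ M₀').rank + 1 = Fintype.card (Fin d × Fin d) := by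
    rw [Matrix.rank, ← h₀, finrank_homSpace_eq_finrank_ker,
      LinearMap.finrank_range_add_finrank_ker, Module.finrank_fintype_fun_eq_card]
  obtain ⟨v, hv0, hv⟩ := Matrix.exists_kernelVec_family (homSystem (K := K) L N) φ₀
    (by rwa [homSystem_map L N φ₀ M₀ M₀' hL₀ hN₀])
  obtain ⟨F, rfl⟩ := Matrix.vec_bijective.2 v
  refine ⟨F, fun h => hv0 (by rw [← Matrix.vec_map, h, Matrix.vec_zero]),
    fun φ M M' hL hN hMM' => ?_⟩
  have hmap := homSystem_map L N φ M M' hL hN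
  rw [← homSystem_mulVec_vec_eq_zero_iff, Matrix.vec_map, ← hmap]
  refine hv φ ?_
  obtain ⟨x, hx, hx0⟩ := Submodule.exists_mem_ne_zero_of_ne_bot
    (p := LinearMap.ker (homSystem (K := K) M M').mulVecLin)
    (by rwa [ne_eq, ← Submodule.finrank_eq_zero, ← finrank_homSpace_eq_finrank_ker])
  exact ⟨x, hx0, by rwa [hmap]⟩

end Hom

def genericMatrix (a : A) :
    Matrix (Fin d) (Fin d) (polyFunctions K (A →ₗ[K] Matrix (Fin d) (Fin d) K)) :=
  Matrix.of fun k l => ⟨fun w => w a k l,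
    Algebra.subset_adjoin ⟨Matrix.entryLinearMap K K k l ∘ₗ LinearMap.applyₗ a, rfl⟩⟩

theorem genericMatrix_map_evalAt (w : A →ₗ[K] Matrix (Fin d) (Fin d) K) (a : A) :
    (genericMatrix a).map (evalAt w) = w a :=
  rfl

theorem exists_isClosed_subset_union_orbitSet [FiniteDimensional K A] (B : ModVar K A d)
    (hB : Module.finrank K (homSpace K A B B) = 1) :
    ∃ Y : Set (ModVar K A d), IsClosed Y ∧ B ∉ Y ∧
      {M | Module.finrank K (homSpace K A B M) ≠ 0 ∧
        Module.finrank K (homSpace K A M B) ≠ 0} ⊆ Y ∪ orbitSet K A B := by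
  let R := polyFunctions K (A →ₗ[K] Matrix (Fin d) (Fin d) K)
  let ev : ModVar K A d → R →+* K := fun M => (evalAt (K := K) M.toLinearMap : R →+* K)
  let const : A → Matrix (Fin d) (Fin d) R := fun a => (B a).map (algebraMap K R)
  have hconst : ∀ M a, (const a).map (ev M) = B a := fun M a => by ext; simp [const, ev]
  have hgen : ∀ (M : ModVar K A d) a, (genericMatrix a).map (ev M) = M a := fun M a =>
    genericMatrix_map_evalAt _ a
  obtain ⟨F, hF0, hF⟩ :=
    exists_intertwiner_family const genericMatrix (ev B) (hconst B) (hgen B) hB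
  obtain ⟨G, hG0, hG⟩ :=
    exists_intertwiner_family genericMatrix const (ev B) (hgen B) (hconst B) hB
  refine ⟨{M | (G * F).map (ev M) = 0}, ?_, fun hBY => ?_, fun M ⟨hBM, hMB⟩ => ?_⟩
  · let := zariskiTopology K (A →ₗ[K] Matrix (Fin d) (Fin d) K)
    exact (isClosed_setOf_map_evalAt_eq_zero (G * F)).preimage continuous_induced_dom
  · have hB0 : Module.finrank K (homSpace K A B B) ≠ 0 := by rw [hB]; exact one_ne_zero
    refine mul_ne_zero_of_commute hB (hG (ev B) B B (hgen B) (hconst B) hB0) hF0 hG0 ?_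
    rw [← Matrix.map_mul]
    exact hBY
  · by_cases hGF : (G * F).map (ev M) = 0
    · exact Or.inl hGF
    · rw [Matrix.map_mul] at hGF
      exact Or.inr (mem_orbitSet_of_mul_ne_zero hB (hF (ev M) B M (hconst M) (hgen M) hBM)
        (hG (ev M) M B (hgen M) (hconst M) hMB) hGF)

end ModVar

/-- Let `A` be a finite-dimensional algebra over an algebraically closed field
`K` and `Z` an irreducible component of `mod(A,d)` which is a brick component
(the generic, i.e. minimal, value of `M ↦ dim End_A(M)` on `Z` is `1`) and does
not contain a dense orbit.  Then the generic (minimal) value of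
`(M,M') ↦ dim Hom_A(M,M')` on `Z × Z` is `0`. -/
theorem hom_eq_zero_of_brick_component [IsAlgClosed K] [FiniteDimensional K A]
    (d : ℕ) (Z : Set (ModVar K A d)) (hZ : Z ∈ irreducibleComponents (ModVar K A d))
    (hbrick : sInf {k : ℕ | ∃ M ∈ Z, k = Module.finrank K (homSpace K A M M)} = 1)
    (hnodense : ¬ ∃ M ∈ Z, closure (orbitSet K A M) = Z) :
    sInf {k : ℕ | ∃ M ∈ Z, ∃ M' ∈ Z, k = Module.finrank K (homSpace K A M M')} = 0 := by
  refine Nat.sInf_eq_zero.2 (Or.inl ?_)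
  by_contra hpairs
  have hne : ∀ M ∈ Z, ∀ M' ∈ Z, Module.finrank K (homSpace K A M M') ≠ 0 :=
    fun M hM M' hM' h => hpairs ⟨M, hM, M', hM', h.symm⟩
  obtain ⟨B, hBZ, hB⟩ := Nat.sInf_mem (Nat.nonempty_of_sInf_eq_succ hbrick)
  obtain ⟨Y, hY, hBY, hcover⟩ :=
    ModVar.exists_isClosed_subset_union_orbitSet B (hB.symm.trans hbrick)
  have hBB : B ∈ orbitSet K A B := ModVar.mem_orbitSet_iff.2 ⟨1, by ext; simp⟩
  exact hnodense ⟨B, hBZ, closure_eq_of_mem_irreducibleComponents_of_subset_union hZ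
    ⟨⟨B, hBB⟩, ModVar.isPreirreducible_orbitSet B⟩ hY hBZ hBY
    fun M hM => hcover ⟨hne B hBZ M hM, hne M hM B hBZ⟩⟩
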